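/- arXiv:1007.3247 — 3 statements merged into one kernel-verified Lean document; each statement's English description precedes it below -/
import Mathlib

section
/- A self-centralizing Lie algebra L of dimension greater than 2 is semisimple, i.e., possesses no nonzero abelian ideals. -/
/-!
If `x ≠ 0` lies in an abelian ideal `I`, then `ad x` maps `L` into `I`, which commutes with `x`,
so `range (ad x) ≤ ker (ad x)`. The kernel is the centralizer of `x`, a line, and rank–nullity
gives `dim L ≤ 1 + 1`.
-/

def lieCentralizer (k : Type) {L : Type} [Field k] [LieRing L] [LieAlgebra k L]
    (l : L) : Submodule k L where
  carrier := {x | ⁅l, x⁆ = 0}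
  add_mem' := by
    intro a b ha hb
    simp only [Set.mem_setOf_eq] at *
    rw [lie_add, ha, hb, add_zero]
  zero_mem' := by simp
  smul_mem' := by
    intro c x hx
    simp only [Set.mem_setOf_eq] at *
    rw [lie_smul, hx, smul_zero]

theorem LinearMap.rank_le_two_mul_rank_ker_of_range_le_ker {K V : Type*} [DivisionRing K]
    [AddCommGroup V] [Module K V] (f : V →ₗ[K] V) (hf : range f ≤ ker f) :
    Module.rank K V ≤ 2 * Module.rank K (ker f) := by
  calc Module.rank K V = Module.rank K (range f) + Module.rank K (ker f) :=
        (rank_range_add_rank_ker f).symm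
    _ ≤ Module.rank K (ker f) + Module.rank K (ker f) := by
        gcongr; exact Submodule.rank_mono hf
    _ = 2 * Module.rank K (ker f) := (two_mul _).symm

section

variable {k L : Type} [Field k] [LieRing L] [LieAlgebra k L]

theorem ker_ad_eq_lieCentralizer (x : L) :
    LinearMap.ker (LieAlgebra.ad k L x) = lieCentralizer k x :=
  rfl

theorem range_ad_le_ker_ad_of_mem_abelian {I : LieIdeal k L}
    (habelian : ∀ x ∈ I, ∀ y ∈ I, ⁅x, y⁆ = 0) {x : L} (hx : x ∈ I) :
    LinearMap.range (LieAlgebra.ad k L x) ≤ LinearMap.ker (LieAlgebra.ad k L x) := by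
  rintro _ ⟨y, rfl⟩
  exact habelian x hx _ (lie_mem_left k L I x y hx)

end

theorem stmt6_general {k L : Type} [Field k] [LieRing L] [LieAlgebra k L]
    (hsc : ∀ l : L, l ≠ 0 → Module.rank k (lieCentralizer k l) = 1)
    (hdim : 2 < Module.rank k L)
    (I : LieIdeal k L) (habelian : ∀ x ∈ I, ∀ y ∈ I, ⁅x, y⁆ = 0) :
    I = ⊥ := by
  refine (LieSubmodule.eq_bot_iff I).mpr fun x hxI => ?_
  by_contra hx
  have hle := (LieAlgebra.ad k L x).rank_le_two_mul_rank_ker_of_range_le_ker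
    (range_ad_le_ker_ad_of_mem_abelian habelian hxI)
  rw [ker_ad_eq_lieCentralizer, hsc x hx, mul_one] at hle
  exact hdim.not_ge hle

/-- A self-centralizing Lie algebra of dimension greater than 2 has no nonzero
abelian ideals, i.e. is semisimple. -/
theorem stmt6 {k L : Type} [Field k] [CharZero k] [LieRing L] [LieAlgebra k L]
    (hsc : ∀ l : L, l ≠ 0 → Module.rank k (lieCentralizer k l) = 1)
    (hdim : 2 < Module.rank k L)
    (I : LieIdeal k L) (habelian : ∀ x ∈ I, ∀ y ∈ I, ⁅x, y⁆ = 0) :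
    I = ⊥ :=
  stmt6_general hsc hdim I habelian
end

section
/- A formal Laurent series g over a field k of characteristic zero lies in the image of the logarithmic derivative LD: R* → R if and only if either W(g) ≥ 0, or W(g) = -1 and res(g) is an integer (i.e., an integer multiple of 1 in k). -/
/-!
Every nonzero Laurent series is `u = X ^ d * v` with `d = W(u)` and `v` a unit power series, and
`u' / u = d / X + v' / v` with `v' / v` a power series; so logarithmic derivatives are exactly the
series `n / X + p` with `n ∈ ℤ` and `p` a power series, which is the stated condition on `W` and
`res`. Conversely `n / X + p` is the logarithmic derivative of `X ^ n * exp (∫ p)`, and the formal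
integral `∫ p` exists because the characteristic is zero.
-/

open HahnSeries PowerSeries

namespace PowerSeries

variable {k : Type*} [Field k] [CharZero k]

theorem exists_constantCoeff_eq_zero_derivative_eq (h : k⟦X⟧) :
    ∃ H : k⟦X⟧, constantCoeff H = 0 ∧ d⁄dX k H = h := by
  -- the constant coefficient is `0⁻¹ * coeff 0 h = 0`
  refine ⟨mk fun n => (n : k)⁻¹ * coeff (n - 1) h, by simp, ?_⟩
  ext n
  rw [coeff_derivative, coeff_mk, Nat.add_sub_cancel, Nat.cast_add_one, mul_right_comm,
    inv_mul_cancel₀ (Nat.cast_add_one_ne_zero n), one_mul]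

theorem exists_isUnit_derivative_eq_mul (h : k⟦X⟧) :
    ∃ v : k⟦X⟧, IsUnit v ∧ d⁄dX k v = h * v := by
  obtain ⟨H, hH0, hH⟩ := exists_constantCoeff_eq_zero_derivative_eq h
  have hsubst : HasSubst H := HasSubst.of_constantCoeff_zero' hH0
  refine ⟨(exp k).subst H, ?_, ?_⟩
  · rw [← coe_substAlgHom hsubst]
    exact (isUnit_exp k).map _
  · rw [derivative_subst hsubst, derivative_exp, hH, mul_comm]

end PowerSeries

namespace LaurentSeries

theorem zero_le_order_iff_exists_coe {R : Type*} [Semiring R] (f : R⸨X⸩) :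
    0 ≤ f.order ↔ ∃ p : R⟦X⟧, (p : R⸨X⸩) = f := by
  rw [← zero_le_orderTop_iff, ← WithTop.coe_zero, le_orderTop_iff_forall]
  constructor
  · intro hf
    refine ⟨PowerSeries.mk fun n => f.coeff n, ?_⟩
    ext n
    rw [PowerSeries.coeff_coe]
    split_ifs with hn
    · exact (hf n (by exact_mod_cast hn)).symm
    · rw [coeff_mk, Int.natAbs_of_nonneg (not_lt.1 hn)]
  · rintro ⟨p, rfl⟩ j hj
    rw [PowerSeries.coeff_coe, if_pos (by exact_mod_cast hj)]

theorem exists_eq_single_intCast_add_coe_iff {R : Type*} [Ring R] (f : R⸨X⸩) :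
    (∃ n : ℤ, ∃ p : R⟦X⟧, f = single (-1) (n : R) + (p : R⸨X⸩)) ↔
      (0 ≤ f.order ∨ (f.order = -1 ∧ ∃ n : ℤ, f.coeff (-1) = n)) := by
  constructor
  · rintro ⟨n, p, rfl⟩
    by_cases hn : (n : R) = 0
    · left
      rw [hn, single_eq_zero, zero_add, zero_le_order_iff_exists_coe]
      exact ⟨p, rfl⟩
    · right
      have hres : (single (-1) (n : R) + (p : R⸨X⸩)).coeff (-1) = (n : R) := by
        rw [coeff_add, coeff_single_same, PowerSeries.coeff_coe, if_pos (by norm_num), add_zero]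
      refine ⟨le_antisymm (order_le_of_coeff_ne_zero (by rwa [hres])) ?_, n, hres⟩
      rw [le_order_iff_forall (fun h => hn (by rw [← hres, h, coeff_zero]))]
      intro j hj
      rw [coeff_add, coeff_single_of_ne hj.ne, PowerSeries.coeff_coe, if_pos (by omega), add_zero]
  · rintro (hf | ⟨hf, n, hn⟩)
    · obtain ⟨p, rfl⟩ := (zero_le_order_iff_exists_coe f).1 hf
      exact ⟨0, p, by rw [Int.cast_zero, single_eq_zero, zero_add]⟩
    · have hpart : 0 ≤ (f - single (-1) (n : R)).order := by
        rw [← zero_le_orderTop_iff, ← WithTop.coe_zero, le_orderTop_iff_forall]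
        intro j hj
        rw [coeff_sub, coeff_single]
        split_ifs with hj1
        · rw [hj1, hn, sub_self]
        · have hj0 : j < 0 := by exact_mod_cast hj
          rw [coeff_eq_zero_of_lt_order (by rw [hf]; omega), sub_zero]
      obtain ⟨p, hp⟩ := (zero_le_order_iff_exists_coe _).1 hpart
      exact ⟨n, p, by rw [hp, add_sub_cancel]⟩

section Derivative

variable {R : Type*} [CommRing R]

theorem coeff_derivative (f : R⸨X⸩) (n : ℤ) :
    (derivative R f).coeff n = (n + 1) • f.coeff (n + 1) := by
  rw [derivative_apply, hasseDeriv_coeff, Nat.cast_one, Ring.choose_one_right]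

theorem derivative_single_mul (d : ℤ) (c : R) (f : R⸨X⸩) :
    derivative R (single d c * f) = single (d - 1) (d * c) * f + single d c * derivative R f := by
  ext n
  rw [coeff_add, coeff_derivative, coeff_single_mul, coeff_single_mul, coeff_single_mul,
    coeff_derivative, zsmul_eq_mul, zsmul_eq_mul, show n - (d - 1) = n - d + 1 by ring,
    show n + 1 - d = n - d + 1 by ring]
  push_cast
  ring

theorem derivative_coe (p : R⟦X⟧) : derivative R (p : R⸨X⸩) = (d⁄dX R p : R⸨X⸩) := by
  ext n
  rw [coeff_derivative, PowerSeries.coeff_coe, PowerSeries.coeff_coe]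
  rcases lt_trichotomy n (-1) with hn | rfl | hn
  · rw [if_pos (by omega), if_pos (by omega), smul_zero]
  · rw [neg_add_cancel, zero_smul, if_pos (by norm_num)]
  · obtain ⟨m, rfl⟩ : ∃ m : ℕ, n = m := ⟨n.toNat, by omega⟩
    rw [if_neg (by omega), if_neg (by omega), PowerSeries.coeff_derivative, zsmul_eq_mul,
      mul_comm, Int.natAbs_natCast, show ((m : ℤ) + 1).natAbs = m + 1 by omega]
    push_cast
    rfl

theorem derivative_single_mul_coe_of_mul_eq_one (d : ℤ) {v w : R⟦X⟧} (hvw : v * w = 1) :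
    derivative R (single d 1 * (v : R⸨X⸩)) =
      (single (-1) (d : R) + ((d⁄dX R v * w : R⟦X⟧) : R⸨X⸩)) * (single d 1 * (v : R⸨X⸩)) := by
  have hvw' : (v : R⸨X⸩) * w = 1 := by rw [← PowerSeries.coe_mul, hvw, PowerSeries.coe_one]
  have hsingle : single (-1) (d : R) * single d 1 = single (d - 1) ((d : R) * 1) := by
    rw [single_mul_single, neg_add_eq_sub]
  rw [derivative_single_mul, derivative_coe, PowerSeries.coe_mul, ← hsingle]
  linear_combination -(single d 1 * (d⁄dX R v : R⸨X⸩)) * hvw'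

end Derivative

section LogDerivative

variable {k : Type*} [Field k]

theorem derivative_div_self_single_mul_coe (d : ℤ) {v w : k⟦X⟧} (hvw : v * w = 1) :
    derivative k (single d 1 * (v : k⸨X⸩)) / (single d 1 * (v : k⸨X⸩)) =
      single (-1) (d : k) + ((d⁄dX k v * w : k⟦X⟧) : k⸨X⸩) := by
  have hv : (v : k⸨X⸩) ≠ 0 := ((IsUnit.of_mul_eq_one w hvw).map (ofPowerSeries ℤ k)).ne_zero
  exact div_eq_of_eq_mul (mul_ne_zero (single_ne_zero one_ne_zero) hv)
    (derivative_single_mul_coe_of_mul_eq_one d hvw)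

theorem exists_derivative_div_self_eq_single_order_add_coe {u : k⸨X⸩} (hu : u ≠ 0) :
    ∃ p : k⟦X⟧, derivative k u / u = single (-1) (u.order : k) + (p : k⸨X⸩) := by
  have hunit : IsUnit u.powerSeriesPart := by
    rw [isUnit_iff_constantCoeff, ← coeff_zero_eq_constantCoeff_apply, powerSeriesPart_coeff,
      Nat.cast_zero, add_zero]
    exact isUnit_iff_ne_zero.mpr (coeff_order_eq_zero.not.mpr hu)
  obtain ⟨w, hw⟩ := hunit.exists_right_inv
  refine ⟨d⁄dX k u.powerSeriesPart * w, ?_⟩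
  conv_lhs => rw [← single_order_mul_powerSeriesPart u]
  exact derivative_div_self_single_mul_coe u.order hw

theorem exists_derivative_div_self_eq_single_intCast_add_coe [CharZero k] (n : ℤ) (p : k⟦X⟧) :
    ∃ u : k⸨X⸩, u ≠ 0 ∧ derivative k u / u = single (-1) (n : k) + (p : k⸨X⸩) := by
  obtain ⟨v, hunit, hv⟩ := PowerSeries.exists_isUnit_derivative_eq_mul p
  obtain ⟨w, hw⟩ := hunit.exists_right_inv
  refine ⟨single n 1 * (v : k⸨X⸩), mul_ne_zero (single_ne_zero one_ne_zero)
    (hunit.map (ofPowerSeries ℤ k)).ne_zero, ?_⟩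
  rw [derivative_div_self_single_mul_coe n hw, hv, mul_assoc, hw, mul_one]

end LogDerivative

end LaurentSeries

/-- A Laurent series `g` is a logarithmic derivative `u'/u` of some nonzero `u`
if and only if `W(g) ≥ 0`, or `W(g) = -1` and the residue of `g` is an integer.
(Here the order of the zero series is `0` by convention, so `g = 0` is covered by
the first alternative.) -/
theorem stmt12 {k : Type} [Field k] [CharZero k] (g : LaurentSeries k) :
    (∃ u : LaurentSeries k, u ≠ 0 ∧ LaurentSeries.derivative k u / u = g) ↔
      (0 ≤ g.order ∨ (g.order = -1 ∧ ∃ n : ℤ, g.coeff (-1) = (n : k))) := by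
  rw [← LaurentSeries.exists_eq_single_intCast_add_coe_iff]
  constructor
  · rintro ⟨u, hu, rfl⟩
    obtain ⟨p, hp⟩ := LaurentSeries.exists_derivative_div_self_eq_single_order_add_coe hu
    exact ⟨u.order, p, hp⟩
  · rintro ⟨n, p, rfl⟩
    exact LaurentSeries.exists_derivative_div_self_eq_single_intCast_add_coe n p
end

section
/- Let f∂ be a nonzero element of Witt(R) with Weierstrass degree W(f) > 1. Then spec(f∂) = {0}: the only eigenvalue of ad(f∂) is 0, and its eigenspace is one-dimensional. -/
/-!
Write `[f, g] = f g' - g f'`. If `f` and `g` have orders `m` and `n`, every coefficient of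
`[f, g]` below `m + n - 1` vanishes and the one at `m + n - 1` is `(n - m)` times the product
of the leading coefficients. If `m > 1`, then `m + n - 1 > n`, so comparing the coefficients
of `X ^ n` in `[f, g] = a g` gives `a = 0`. If `[f, g] = 0`, then `n = m`; subtracting the
multiple of `f` with the same leading coefficient leaves a centralizing series of order `> m`,
hence zero.
-/

open HahnSeries LaurentSeries

namespace HahnSeries

theorem ne_zero_of_order_ne_zero {Γ R : Type*} [Zero Γ] [PartialOrder Γ] [Zero R] {x : R⟦Γ⟧}
    (h : x.order ≠ 0) : x ≠ 0 :=
  ne_of_apply_ne order (by rwa [order_zero])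

variable {Γ R : Type*} [AddCommMonoid Γ] [LinearOrder Γ] [IsOrderedCancelAddMonoid Γ]
  [NonUnitalNonAssocSemiring R]

theorem coeff_mul_add_of_le_orderTop {x y : R⟦Γ⟧} {a b : Γ} (ha : (a : WithTop Γ) ≤ x.orderTop)
    (hb : (b : WithTop Γ) ≤ y.orderTop) : (x * y).coeff (a + b) = x.coeff a * y.coeff b := by
  rcases ha.lt_or_eq with ha | ha
  · rw [coeff_eq_zero_of_lt_orderTop ha, zero_mul]
    exact coeff_eq_zero_of_lt_orderTop <|
      (WithTop.add_lt_add_of_lt_of_le WithTop.coe_ne_top ha hb).trans_le orderTop_add_le_mul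
  rcases hb.lt_or_eq with hb | hb
  · rw [coeff_eq_zero_of_lt_orderTop hb, mul_zero]
    exact coeff_eq_zero_of_lt_orderTop <|
      (WithTop.add_lt_add_of_le_of_lt WithTop.coe_ne_top ha.le hb).trans_le orderTop_add_le_mul
  have hx : x ≠ 0 := orderTop_ne_top.mp (ha ▸ WithTop.coe_ne_top)
  have hy : y ≠ 0 := orderTop_ne_top.mp (hb ▸ WithTop.coe_ne_top)
  obtain rfl : x.order = a := WithTop.coe_injective (order_eq_orderTop_of_ne_zero hx ▸ ha.symm)
  obtain rfl : y.order = b := WithTop.coe_injective (order_eq_orderTop_of_ne_zero hy ▸ hb.symm)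
  rw [coeff_mul_order_add_order, leadingCoeff_eq, leadingCoeff_eq]

end HahnSeries

namespace LaurentSeries

section Derivative

variable {R V : Type*} [AddCommGroup V] [Semiring R] [Module R V]

theorem coeff_derivative_s14 (g : LaurentSeries V) (n : ℤ) :
    (derivative R g).coeff n = (n + 1) • g.coeff (n + 1) := by
  rw [derivative_apply, hasseDeriv_coeff]
  norm_num [Ring.choose_one_right]

theorem coeff_derivative_sub_one (g : LaurentSeries V) (n : ℤ) :
    (derivative R g).coeff (n - 1) = n • g.coeff n := by
  rw [coeff_derivative_s14, sub_add_cancel]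

theorem le_orderTop_derivative {g : LaurentSeries V} {a : ℤ} (ha : (a : WithTop ℤ) ≤ g.orderTop) :
    ((a - 1 : ℤ) : WithTop ℤ) ≤ (derivative R g).orderTop := by
  refine le_orderTop_iff_forall.mpr fun j hj => ?_
  have hj : j + 1 < a := by have := WithTop.coe_lt_coe.mp hj; omega
  rw [coeff_derivative_s14, coeff_eq_zero_of_lt_orderTop ((WithTop.coe_lt_coe.mpr hj).trans_le ha),
    smul_zero]

end Derivative

section WittBracket

variable {R : Type*} [CommRing R]

noncomputable def wittBracket (f g : LaurentSeries R) : LaurentSeries R :=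
  f * derivative R g - g * derivative R f

variable {f g : LaurentSeries R} {a b : ℤ}

theorem le_orderTop_wittBracket (ha : (a : WithTop ℤ) ≤ f.orderTop)
    (hb : (b : WithTop ℤ) ≤ g.orderTop) :
    ((a + b - 1 : ℤ) : WithTop ℤ) ≤ (wittBracket f g).orderTop := by
  refine le_trans (le_min ?_ ?_) min_orderTop_le_orderTop_sub
  · rw [show a + b - 1 = a + (b - 1) by ring]
    exact (add_le_add ha (le_orderTop_derivative hb)).trans orderTop_add_le_mul
  · rw [show a + b - 1 = b + (a - 1) by ring]
    exact (add_le_add hb (le_orderTop_derivative ha)).trans orderTop_add_le_mul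

theorem coeff_wittBracket_add_sub_one (ha : (a : WithTop ℤ) ≤ f.orderTop)
    (hb : (b : WithTop ℤ) ≤ g.orderTop) :
    (wittBracket f g).coeff (a + b - 1) = (b - a) • (f.coeff a * g.coeff b) := by
  have hfg : (f * derivative R g).coeff (a + b - 1) = f.coeff a * (b • g.coeff b) := by
    rw [show a + b - 1 = a + (b - 1) by ring,
      coeff_mul_add_of_le_orderTop ha (le_orderTop_derivative hb), coeff_derivative_sub_one]
  have hgf : (g * derivative R f).coeff (a + b - 1) = g.coeff b * (a • f.coeff a) := by
    rw [show a + b - 1 = b + (a - 1) by ring,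
      coeff_mul_add_of_le_orderTop hb (le_orderTop_derivative ha), coeff_derivative_sub_one]
  rw [wittBracket, coeff_sub, hfg, hgf, mul_smul_comm, mul_smul_comm, mul_comm (g.coeff b),
    sub_smul]

theorem wittBracket_self (f : LaurentSeries R) : wittBracket f f = 0 :=
  sub_self _

theorem wittBracket_sub_right (f g h : LaurentSeries R) :
    wittBracket f (g - h) = wittBracket f g - wittBracket f h := by
  simp only [wittBracket, map_sub]
  ring

theorem wittBracket_smul_right (c : R) (f g : LaurentSeries R) :
    wittBracket f (c • g) = c • wittBracket f g := by
  rw [wittBracket, wittBracket, map_smul]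
  simp only [← C_mul_eq_smul]
  ring

theorem eq_zero_of_wittBracket_eq_smul [NoZeroDivisors R] (hf : 1 < f.order) (hg : g ≠ 0)
    {c : R} (h : wittBracket f g = c • g) : c = 0 := by
  have hf0 : f ≠ 0 := ne_zero_of_order_ne_zero (by omega)
  have hf2 : ((2 : ℤ) : WithTop ℤ) ≤ f.orderTop := by
    rw [← order_eq_orderTop_of_ne_zero hf0, WithTop.coe_le_coe]
    omega
  have hlt : (g.order : WithTop ℤ) < ((2 + g.order - 1 : ℤ) : WithTop ℤ) :=
    WithTop.coe_lt_coe.mpr (by omega)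
  have hcoeff := congrArg (coeff · g.order) h
  simp only [coeff_smul, smul_eq_mul, coeff_eq_zero_of_lt_orderTop (hlt.trans_le
    (le_orderTop_wittBracket hf2 (order_eq_orderTop_of_ne_zero hg).le))] at hcoeff
  exact (mul_eq_zero.mp hcoeff.symm).resolve_right (mt coeff_order_eq_zero.mp hg)

theorem order_eq_of_wittBracket_eq_zero [IsDomain R] [CharZero R] (hf : f ≠ 0) (hg : g ≠ 0)
    (h : wittBracket f g = 0) : g.order = f.order := by
  have hcoeff := coeff_wittBracket_add_sub_one (order_eq_orderTop_of_ne_zero hf).le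
    (order_eq_orderTop_of_ne_zero hg).le
  rw [h, coeff_zero, eq_comm, smul_eq_zero] at hcoeff
  have := hcoeff.resolve_right
    (mul_ne_zero (mt coeff_order_eq_zero.mp hf) (mt coeff_order_eq_zero.mp hg))
  omega

end WittBracket

theorem exists_eq_smul_of_wittBracket_eq_zero {k : Type*} [Field k] [CharZero k]
    {f g : LaurentSeries k} (hf : f ≠ 0) (h : wittBracket f g = 0) : ∃ c : k, g = c • f := by
  set c := g.coeff f.order / f.coeff f.order
  refine ⟨c, sub_eq_zero.mp (by_contra fun hne => ?_)⟩
  have hbr : wittBracket f (g - c • f) = 0 := by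
    rw [wittBracket_sub_right, wittBracket_smul_right, wittBracket_self, h, smul_zero, sub_zero]
  apply mt coeff_order_eq_zero.mp hne
  rw [order_eq_of_wittBracket_eq_zero hf hne hbr, coeff_sub, coeff_smul, smul_eq_mul,
    div_mul_cancel₀ _ (mt coeff_order_eq_zero.mp hf), sub_self]

end LaurentSeries

theorem stmt14_general {k : Type} [Field k] [CharZero k]
    (f : LaurentSeries k) (horder : 1 < f.order) :
    (∀ a : k, (∃ g : LaurentSeries k, g ≠ 0 ∧
        f * LaurentSeries.derivative k g - g * LaurentSeries.derivative k f = a • g) →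
      a = 0) ∧
    {g : LaurentSeries k |
        f * LaurentSeries.derivative k g - g * LaurentSeries.derivative k f = 0}
      = {g : LaurentSeries k | ∃ c : k, g = c • f} := by
  have hf : f ≠ 0 := ne_zero_of_order_ne_zero (by omega)
  refine ⟨fun a ⟨g, hg, h⟩ => eq_zero_of_wittBracket_eq_smul horder hg h, ?_⟩
  ext g
  refine ⟨exists_eq_smul_of_wittBracket_eq_zero hf, ?_⟩
  rintro ⟨c, rfl⟩
  change wittBracket f (c • f) = 0
  rw [wittBracket_smul_right, wittBracket_self, smul_zero]

/-- If `f∂ ∈ Witt(R)` is nonzero with Weierstrass degree `W(f) > 1`, then the only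
eigenvalue of `ad(f∂)` is `0`, and the `0`-eigenspace is the one-dimensional space
spanned by `f∂`. -/
theorem stmt14 {k : Type} [Field k] [CharZero k]
    (f : LaurentSeries k) (hf : f ≠ 0) (horder : 1 < f.order) :
    (∀ a : k, (∃ g : LaurentSeries k, g ≠ 0 ∧
        f * LaurentSeries.derivative k g - g * LaurentSeries.derivative k f = a • g) →
      a = 0) ∧
    {g : LaurentSeries k |
        f * LaurentSeries.derivative k g - g * LaurentSeries.derivative k f = 0}
      = {g : LaurentSeries k | ∃ c : k, g = c • f} :=
  stmt14_general f horder
end
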